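/- arXiv:1811.05843 — 2 statements merged into one kernel-verified Lean document; each statement's English description precedes it below -/
import Mathlib

section
/- For $0 \leq ct < x < 1$, the periodic convolution $\frac{1}{2\sinh(1/2)}\left[\int_0^{ct} \cosh(1/2 - x + y)\sinh(-1 - 2y + 2ct)\,dy + \int_{ct}^{x} \cosh(1/2 - x + y)\sinh(1 - 2y + 2ct)\,dy + \int_x^1 \cosh(1/2 + x - y)\sinh(1 - 2y + 2ct)\,dy\right]$ equals $\frac{2}{3}\left[\cosh(1/2)\sinh(1/2 - (x - ct)) - \sinh(1/2 - (x-ct))\cosh(1/2 - (x-ct))\right]$. -/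
/-!
Product-to-sum turns `cosh (α + y) * sinh (β - 2y)` into `(sinh (α + β - y) - sinh (α - β + 3y)) / 2`,
which has an explicit antiderivative. Summing the three pieces, the boundary terms at `y = 0` and
`y = 1` cancel (this is the periodicity of the Green's function), and with `u = 1/2 - (x - ct)` what
remains is `(cosh (1 + u) - cosh (1 - u) - cosh (2u + 1/2) + cosh (2u - 1/2)) / 3
= (2 sinh 1 sinh u - 2 sinh 2u sinh (1/2)) / 3`; the double-angle formulas finish.
-/

open Real

lemma Real.cosh_mul_sinh (a b : ℝ) : cosh a * sinh b = (sinh (a + b) - sinh (a - b)) / 2 := by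
  rw [sinh_add, sinh_sub]; ring

lemma Real.cosh_add_sub_cosh_sub (a b : ℝ) : cosh (a + b) - cosh (a - b) = 2 * sinh a * sinh b := by
  rw [cosh_add, cosh_sub]; ring

theorem integral_cosh_add_mul_sinh_sub_two_mul (α β a b : ℝ) :
    ∫ y in a..b, cosh (α + y) * sinh (β - 2 * y) =
      (-(1/2) * cosh (α + β - b) - 1/6 * cosh (α - β + 3 * b)) -
        (-(1/2) * cosh (α + β - a) - 1/6 * cosh (α - β + 3 * a)) := by
  refine intervalIntegral.integral_eq_sub_of_hasDerivAt
    (f := fun y ↦ -(1/2) * cosh (α + β - y) - 1/6 * cosh (α - β + 3 * y)) (fun y _ ↦ ?_)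
    ((by fun_prop : Continuous fun y ↦ cosh (α + y) * sinh (β - 2 * y)).intervalIntegrable a b)
  have h₁ := ((hasDerivAt_id y).const_sub (α + β)).cosh.const_mul (-(1/2) : ℝ)
  have h₂ := (((hasDerivAt_id y).const_mul 3).const_add (α - β)).cosh.const_mul (1/6 : ℝ)
  refine (h₁.sub h₂).congr_deriv ?_
  rw [cosh_mul_sinh, show α + y + (β - 2 * y) = α + β - y by ring,
    show α + y - (β - 2 * y) = α - β + 3 * y by ring]
  simp only [id]
  ring

theorem periodic_convolution_eq {s x u : ℝ} (hu : u = 1/2 - (x - s)) :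
    (∫ y in (0:ℝ)..s, cosh (1/2 - x + y) * sinh (-1 - 2*y + 2*s)) +
      (∫ y in s..x, cosh (1/2 - x + y) * sinh (1 - 2*y + 2*s)) +
      (∫ y in x..(1:ℝ), cosh (1/2 + x - y) * sinh (1 - 2*y + 2*s)) =
    (cosh (1 + u) - cosh (1 - u) - (cosh (2 * u + 1/2) - cosh (2 * u - 1/2))) / 3 := by
  have e1 : ∀ y : ℝ, sinh (-1 - 2*y + 2*s) = sinh ((2*s - 1) - 2*y) := fun y ↦ by ring_nf
  have e2 : ∀ y : ℝ, sinh (1 - 2*y + 2*s) = sinh ((1 + 2*s) - 2*y) := fun y ↦ by ring_nf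
  have e3 : ∀ y : ℝ, cosh (1/2 + x - y) = cosh ((-(1/2) - x) + y) := fun y ↦ by
    rw [← cosh_neg]; ring_nf
  simp only [e1, e2, e3, integral_cosh_add_mul_sinh_sub_two_mul]
  obtain rfl : x = s + 1/2 - u := by linarith
  ring_nf
  -- `ring_nf` leaves some arguments with the opposite sign to those on the right; `cosh` is even
  rw [← cosh_neg (-1 + u), ← cosh_neg (1/2 - u * 2), ← cosh_neg (-1/2 - u * 2)]
  ring_nf

theorem stmt_6_general (c t x : ℝ) :
    (1 / (2 * Real.sinh (1/2))) *
      ((∫ y in (0:ℝ)..(c*t), Real.cosh (1/2 - x + y) * Real.sinh (-1 - 2*y + 2*c*t)) +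
       (∫ y in (c*t)..x, Real.cosh (1/2 - x + y) * Real.sinh (1 - 2*y + 2*c*t)) +
       (∫ y in x..(1:ℝ), Real.cosh (1/2 + x - y) * Real.sinh (1 - 2*y + 2*c*t))) =
      (2/3) * (Real.cosh (1/2) * Real.sinh (1/2 - (x - c*t)) -
        Real.sinh (1/2 - (x - c*t)) * Real.cosh (1/2 - (x - c*t))) := by
  set u := 1/2 - (x - c*t) with hu
  have sinh_one : sinh 1 = 2 * sinh (1/2) * cosh (1/2) := by
    rw [← sinh_two_mul]; norm_num
  have sinh_half_ne_zero : sinh (1/2) ≠ 0 := (sinh_pos_iff.mpr (by norm_num)).ne'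
  rw [mul_assoc 2 c t, periodic_convolution_eq hu, cosh_add_sub_cosh_sub, cosh_add_sub_cosh_sub,
    sinh_two_mul, sinh_one]
  field_simp

theorem stmt_6 (c t x : ℝ) (h0 : 0 ≤ c*t) (h1 : c*t < x) (h2 : x < 1) :
    (1 / (2 * Real.sinh (1/2))) *
      ((∫ y in (0:ℝ)..(c*t), Real.cosh (1/2 - x + y) * Real.sinh (-1 - 2*y + 2*c*t)) +
       (∫ y in (c*t)..x, Real.cosh (1/2 - x + y) * Real.sinh (1 - 2*y + 2*c*t)) +
       (∫ y in x..(1:ℝ), Real.cosh (1/2 + x - y) * Real.sinh (1 - 2*y + 2*c*t))) =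
      (2/3) * (Real.cosh (1/2) * Real.sinh (1/2 - (x - c*t)) -
        Real.sinh (1/2 - (x - c*t)) * Real.cosh (1/2 - (x - c*t))) :=
  stmt_6_general c t x
end

section
/- For $0 < x < ct < 1$, the periodic convolution $G * \sinh(2\zeta)(x)$, with $G(x) = \frac{\cosh(1/2 - x + [x])}{2\sinh(1/2)}$ and $\zeta(y) = 1/2 - (y - ct) + [y - ct]$, equals $\frac{2}{3}\left[-\cosh(1/2)\sinh(1/2 + (x - ct)) + \sinh(1/2 + (x - ct))\cosh(1/2 + (x - ct))\right]$. -/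
/-!
On `(0, x)`, `(x, ct)` and `(ct, 1)` the integer parts `⌊x - y⌋` and `⌊y - ct⌋` are constant, so
there the integrand is `cosh (y + u) * sinh (v - 2y) / (2 sinh (1/2))` for constants `u, v`. By the
product-to-sum formula this has an elementary antiderivative, and the three contributions add up to
the closed form.
-/

open Real MeasureTheory intervalIntegral Set

theorem integral_cosh_mul_sinh (u v a b : ℝ) :
    ∫ y in a..b, cosh (y + u) * sinh (v - 2 * y) =
      (cosh (u + v - a) - cosh (u + v - b)) / 2 +
        (cosh (v - u - 3 * a) - cosh (v - u - 3 * b)) / 6 := by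
  have hderiv (y : ℝ) : HasDerivAt (fun y => -cosh (u + v - y) / 2 - cosh (v - u - 3 * y) / 6)
      (cosh (y + u) * sinh (v - 2 * y)) y := by
    have h₁ := (((hasDerivAt_id y).const_sub (u + v)).cosh.neg).div_const 2
    have h₂ := ((((hasDerivAt_id y).const_mul 3).const_sub (v - u)).cosh).div_const 6
    refine (h₁.sub h₂).congr_deriv ?_
    -- product to sum: `2 cosh(y + u) sinh(v - 2y) = sinh(u + v - y) + sinh(v - u - 3y)`
    rw [id, show u + v - y = (v - 2 * y) + (y + u) by ring,
      show v - u - 3 * y = (v - 2 * y) - (y + u) by ring,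
      sinh_add (v - 2 * y), sinh_sub (v - 2 * y)]
    ring
  rw [integral_eq_sub_of_hasDerivAt (fun y _ => hderiv y)
    ((by fun_prop : Continuous _).intervalIntegrable _ _)]
  ring

theorem integral_eq_add_add_of_eqOn_Ioo {E : Type*} [NormedAddCommGroup E] [NormedSpace ℝ E]
    {f g₁ g₂ g₃ : ℝ → E} {a b c d : ℝ} (hab : a ≤ b) (hbc : b ≤ c) (hcd : c ≤ d)
    (hg₁ : IntervalIntegrable g₁ volume a b) (hg₂ : IntervalIntegrable g₂ volume b c)
    (hg₃ : IntervalIntegrable g₃ volume c d)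
    (h₁ : EqOn f g₁ (Ioo a b)) (h₂ : EqOn f g₂ (Ioo b c)) (h₃ : EqOn f g₃ (Ioo c d)) :
    ∫ y in a..d, f y =
      (∫ y in a..b, g₁ y) + (∫ y in b..c, g₂ y) + ∫ y in c..d, g₃ y := by
  have hf₁ : IntervalIntegrable f volume a b := hg₁.congr_uIoo (uIoo_of_le hab ▸ h₁.symm)
  have hf₂ : IntervalIntegrable f volume b c := hg₂.congr_uIoo (uIoo_of_le hbc ▸ h₂.symm)
  have hf₃ : IntervalIntegrable f volume c d := hg₃.congr_uIoo (uIoo_of_le hcd ▸ h₃.symm)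
  rw [← integral_add_adjacent_intervals (hf₁.trans hf₂) hf₃,
    ← integral_add_adjacent_intervals hf₁ hf₂, integral_congr_Ioo_of_le hab h₁,
    integral_congr_Ioo_of_le hbc h₂, integral_congr_Ioo_of_le hcd h₃]

theorem stmt_7 (c t x : ℝ) (h0 : 0 < x) (h1 : x < c*t) (h2 : c*t < 1)
    (G ζ : ℝ → ℝ)
    (hG : ∀ y, G y = Real.cosh (1/2 - y + (⌊y⌋ : ℝ)) / (2 * Real.sinh (1/2)))
    (hζ : ∀ y, ζ y = 1/2 - (y - c*t) + (⌊y - c*t⌋ : ℝ)) :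
    (∫ y in (0:ℝ)..1, G (x - y) * Real.sinh (2 * ζ y)) =
      (2/3) * (-(Real.cosh (1/2) * Real.sinh (1/2 + (x - c*t))) +
        Real.sinh (1/2 + (x - c*t)) * Real.cosh (1/2 + (x - c*t))) := by
  set s := c * t
  set g : ℤ → ℤ → ℝ → ℝ := fun n m y =>
    cosh (y + (1/2 + n - x)) * sinh (2 * s + 1 + 2 * m - 2 * y) / (2 * sinh (1/2))
  have piece {n m : ℤ} {a b : ℝ} (hn : ∀ y ∈ Ioo a b, ⌊x - y⌋ = n)
      (hm : ∀ y ∈ Ioo a b, ⌊y - s⌋ = m) :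
      EqOn (fun y => G (x - y) * sinh (2 * ζ y)) (g n m) (Ioo a b) := by
    intro y hy
    simp only [g, hG, hζ, hn y hy, hm y hy]
    ring_nf
  have hg (n m : ℤ) (a b : ℝ) : IntervalIntegrable (g n m) volume a b :=
    (by fun_prop : Continuous (g n m)).intervalIntegrable a b
  rw [integral_eq_add_add_of_eqOn_Ioo h0.le h1.le h2.le (hg 0 (-1) _ _) (hg (-1) (-1) _ _)
    (hg (-1) 0 _ _) (piece ?_ ?_) (piece ?_ ?_) (piece ?_ ?_)]
  · simp only [g, intervalIntegral.integral_div, integral_cosh_mul_sinh]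
    have hS : 0 < sinh (1/2 : ℝ) := sinh_pos_iff.2 (by norm_num)
    rw [← add_div, ← add_div, div_eq_iff (by positivity)]
    -- in exponentials: a Laurent polynomial identity in `exp (1/2)`, `exp x`, `exp s`
    simp only [cosh_eq, sinh_eq]
    ring_nf
    simp only [← exp_nat_mul, ← exp_add]
    push_cast
    ring_nf
  all_goals
    intro y hy
    rw [Int.floor_eq_iff]
    constructor <;> push_cast <;> linarith [hy.1, hy.2]
end
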